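/- Let n ∈ ℕ and for 0 ≤ k ≤ n let F_k be a left-continuous integrable BV function. Let m^{(N)} (N ∈ ℕ) and m be maps from [0,∞) to the positive Borel measures on ℝ of total mass at most 1, each continuous with respect to the bounded Lipschitz metric, and suppose that for every t ≥ 0 and every f ∈ C₀(ℝ), ∫_ℝ f dm^{(N)}(t) → ∫_ℝ f dm(t) as N → ∞. Then for every R > 0 and every 0 ≤ k ≤ n, lim_{N→∞} ∫₀^R ∫_{−R}^{R} | (F_k*m^{(N)}(t))(x) − (F_k*m(t))(x) | dx dt = 0. -/

import Mathlib

/-!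
Approximate `F_k` in `L¹` by a smooth compactly supported, hence Lipschitz, function `g`. Since all
measures have mass at most `1`, Young's inequality makes the cost of replacing `F_k` by `g` at most
`2 ‖F_k - g‖₁`, uniformly in `N` and `t`; here `F_k`, a difference of two bounded monotone functions
by the Jordan decomposition of `ν_k`, is bounded and measurable, so its convolutions are genuine
integrals. For `g` itself, `(g * m⁽ᴺ⁾(t))(x) → (g * m(t))(x)` by testing the weak* convergence
against `y ↦ g (x - y)`, with the uniform bound `2 ‖g‖_∞`. These convolutions are Lipschitz in `x`
and, by the bounded Lipschitz continuity of the measures, continuous in `t`; hence they are jointly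
continuous, so measurable, and dominated convergence on `[0, R] × [-R, R]` concludes.
-/

open MeasureTheory Filter ZeroAtInfty

/-- A test function for the bounded Lipschitz (Dudley) norm: `f ∈ C₀(ℝ)` with
`‖f‖_∞ + Lip(f) ≤ 1`. -/
def BLtest (f : C₀(ℝ, ℝ)) : Prop := ∃ K : NNReal, LipschitzWith K f ∧ ‖f‖ + (K : ℝ) ≤ 1

/-- The bounded Lipschitz (Dudley) distance `‖μ − ν‖_BL` between two finite
(positive) measures. -/
noncomputable def blDist (μ ν : MeasureTheory.Measure ℝ) : ℝ :=
  sSup {r | ∃ f : C₀(ℝ, ℝ), BLtest f ∧ r = (∫ x, f x ∂μ) - ∫ x, f x ∂ν}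

/-- Continuity of a measure-valued map on `[0,∞)` with respect to the bounded
Lipschitz metric. -/
def BLContinuous (m : ℝ → MeasureTheory.Measure ℝ) : Prop :=
  ∀ t : ℝ, 0 ≤ t → ∀ ε : ℝ, 0 < ε → ∃ δ : ℝ, 0 < δ ∧
    ∀ s : ℝ, 0 ≤ s → |s - t| < δ → blDist (m s) (m t) < ε

open Set Topology

theorem ENNReal.tendsto_nhds_zero_of_forall_le_add {ι : Type*} {l : Filter ι} {u : ι → ENNReal}
    (h : ∀ ε > 0, ∃ v : ι → ENNReal, Tendsto v l (𝓝 0) ∧ ∀ i, u i ≤ ε + v i) :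
    Tendsto u l (𝓝 0) := by
  refine ENNReal.tendsto_nhds_zero.2 fun ε hε => ?_
  obtain ⟨v, hv, huv⟩ := h (ε / 2) (ENNReal.half_pos hε.ne')
  filter_upwards [ENNReal.tendsto_nhds_zero.1 hv (ε / 2) (ENNReal.half_pos hε.ne')] with i hi
  calc u i ≤ ε / 2 + v i := huv i
    _ ≤ ε / 2 + ε / 2 := by gcongr
    _ = ε := ENNReal.add_halves ε

namespace MeasureTheory

namespace SignedMeasure

variable {α : Type*} [MeasurableSpace α]

theorem exists_apply_eq_real_sub_real (s : SignedMeasure α) :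
    ∃ μ ν : Measure α, IsFiniteMeasure μ ∧ IsFiniteMeasure ν ∧
      ∀ A, MeasurableSet A → s A = μ.real A - ν.real A := by
  refine ⟨s.toJordanDecomposition.posPart, s.toJordanDecomposition.negPart, inferInstance,
    inferInstance, fun A hA => ?_⟩
  conv_lhs => rw [← s.toSignedMeasure_toJordanDecomposition]
  exact Measure.toSignedMeasure_sub_apply hA

theorem exists_forall_norm_apply_le (s : SignedMeasure α) : ∃ C, ∀ A, ‖s A‖ ≤ C := by
  obtain ⟨μ, ν, _, _, hs⟩ := s.exists_apply_eq_real_sub_real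
  refine ⟨μ.real univ + ν.real univ, fun A => ?_⟩
  by_cases hA : MeasurableSet A
  · rw [hs A hA, Real.norm_eq_abs, abs_sub_le_iff]
    have hμ := measureReal_mono (μ := μ) (subset_univ A)
    have hν := measureReal_mono (μ := ν) (subset_univ A)
    constructor <;> linarith [measureReal_nonneg (μ := μ) (s := A),
      measureReal_nonneg (μ := ν) (s := A)]
  · rw [s.not_measurable hA, norm_zero]
    positivity

theorem measurable_apply_Iio (s : SignedMeasure ℝ) : Measurable fun x => s (Iio x) := by
  obtain ⟨μ, ν, _, _, hs⟩ := s.exists_apply_eq_real_sub_real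
  have hmono : ∀ ρ : Measure ℝ, IsFiniteMeasure ρ → Monotone fun x => ρ.real (Iio x) :=
    fun ρ _ a b hab => measureReal_mono (Iio_subset_Iio hab)
  simp_rw [hs _ measurableSet_Iio]
  exact (hmono μ ‹_›).measurable.sub (hmono ν ‹_›).measurable

end SignedMeasure

theorem isFiniteMeasure_of_measure_univ_le_one {α : Type*} [MeasurableSpace α] {μ : Measure α}
    (hμ : μ univ ≤ 1) : IsFiniteMeasure μ :=
  ⟨hμ.trans_lt ENNReal.one_lt_top⟩

theorem norm_integral_le_of_measure_univ_le_one {α : Type*} [MeasurableSpace α] {μ : Measure α}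
    (hμ : μ univ ≤ 1) {f : α → ℝ} {C : ℝ} (hC0 : 0 ≤ C) (hC : ∀ x, ‖f x‖ ≤ C) :
    ‖∫ x, f x ∂μ‖ ≤ C := by
  have := isFiniteMeasure_of_measure_univ_le_one hμ
  calc ‖∫ x, f x ∂μ‖ ≤ C * μ.real univ := norm_integral_le_of_norm_le_const (ae_of_all _ hC)
    _ ≤ C := mul_le_of_le_one_right hC0 (ENNReal.toReal_le_of_le_ofReal zero_le_one (by simpa))

theorem Integrable.exists_lipschitzWith_lintegral_enorm_sub_le {F : ℝ → ℝ}
    (hF : Integrable F) {ε : ENNReal} (hε : ε ≠ 0) :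
    ∃ (g : C₀(ℝ, ℝ)) (K : NNReal), LipschitzWith K g ∧ ∫⁻ x, ‖F x - g x‖ₑ ≤ ε := by
  obtain ⟨r, -, hr, hrε⟩ := ENNReal.lt_iff_exists_real_btwn.1 (pos_iff_ne_zero.2 hε)
  obtain ⟨g, hgc, hgs, hFg⟩ :=
    (memLp_one_iff_integrable.2 hF).exist_eLpNorm_sub_le ENNReal.one_ne_top le_rfl
      (ENNReal.ofReal_pos.1 hr)
  obtain ⟨K, hK⟩ := hgs.lipschitzWith_of_hasCompactSupport hgc (by simp)
  refine ⟨⟨⟨g, hgs.continuous⟩, hgc.is_zero_at_infty⟩, K, hK, ?_⟩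
  rw [eLpNorm_one_eq_lintegral_enorm] at hFg
  exact hFg.trans hrε.le

end MeasureTheory

theorem ZeroAtInftyContinuousMap.norm_apply_le {α : Type*} [TopologicalSpace α]
    (f : C₀(α, ℝ)) (x : α) : ‖f x‖ ≤ ‖f‖ := by
  rw [← norm_toBCF_eq_norm]
  exact f.toBCF.norm_coe_le_norm x

theorem BLtest.norm_le_one {f : C₀(ℝ, ℝ)} (hf : BLtest f) : ‖f‖ ≤ 1 := by
  obtain ⟨K, -, hK⟩ := hf
  linarith [K.coe_nonneg]

section BoundedLipschitz

variable {μ ρ : Measure ℝ} [IsFiniteMeasure μ] [IsFiniteMeasure ρ]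

theorem bddAbove_integral_sub_integral_of_BLtest :
    BddAbove {r | ∃ f : C₀(ℝ, ℝ), BLtest f ∧ r = (∫ x, f x ∂μ) - ∫ x, f x ∂ρ} := by
  refine ⟨μ.real univ + ρ.real univ, ?_⟩
  rintro r ⟨f, hf, rfl⟩
  have hbound : ∀ x, ‖f x‖ ≤ 1 := fun x => (f.norm_apply_le x).trans hf.norm_le_one
  have hμ := norm_integral_le_of_norm_le_const (μ := μ) (ae_of_all _ hbound)
  have hρ := norm_integral_le_of_norm_le_const (μ := ρ) (ae_of_all _ hbound)
  rw [one_mul, Real.norm_eq_abs] at hμ hρ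
  linarith [neg_abs_le (∫ x, f x ∂ρ), le_abs_self (∫ x, f x ∂μ)]

/-- Rescaling `f` by `c⁻¹` makes it a test function for the bounded Lipschitz norm. -/
theorem integral_sub_integral_le_mul_blDist (f : C₀(ℝ, ℝ)) {K : NNReal} (hf : LipschitzWith K f)
    {c : ℝ} (hc : 0 < c) (hfc : ‖f‖ + K ≤ c) :
    (∫ x, f x ∂μ) - ∫ x, f x ∂ρ ≤ c * blDist μ ρ := by
  have htest : BLtest (c⁻¹ • f) := by
    refine ⟨‖c⁻¹‖₊ * K, (lipschitzWith_smul c⁻¹).comp hf, ?_⟩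
    rw [norm_smul, NNReal.coe_mul, coe_nnnorm, ← mul_add, Real.norm_of_nonneg (by positivity)]
    exact inv_mul_le_one_of_le₀ hfc hc.le
  have hle := le_csSup (bddAbove_integral_sub_integral_of_BLtest (μ := μ) (ρ := ρ))
    ⟨c⁻¹ • f, htest, rfl⟩
  simp only [ZeroAtInftyContinuousMap.coe_smul, Pi.smul_apply, smul_eq_mul, integral_const_mul,
    ← mul_sub] at hle
  rwa [inv_mul_le_iff₀ hc] at hle

theorem abs_integral_sub_integral_le_mul_blDist (f : C₀(ℝ, ℝ)) {K : NNReal}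
    (hf : LipschitzWith K f) {c : ℝ} (hc : 0 < c) (hfc : ‖f‖ + K ≤ c) :
    |(∫ x, f x ∂μ) - ∫ x, f x ∂ρ| ≤ c * blDist μ ρ := by
  have hneg := integral_sub_integral_le_mul_blDist (μ := μ) (ρ := ρ) (-f) hf.neg hc
    (by rwa [norm_neg])
  simp only [ZeroAtInftyContinuousMap.coe_neg, Pi.neg_apply, integral_neg] at hneg
  exact abs_sub_le_iff.2 ⟨integral_sub_integral_le_mul_blDist f hf hc hfc, by linarith⟩

end BoundedLipschitz

theorem BLContinuous.continuousOn_integral {m : ℝ → Measure ℝ} (hm : BLContinuous m)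
    (hmass : ∀ t, 0 ≤ t → m t univ ≤ 1) (f : C₀(ℝ, ℝ)) {K : NNReal} (hf : LipschitzWith K f) :
    ContinuousOn (fun t => ∫ x, f x ∂m t) (Ici 0) := by
  refine Metric.continuousOn_iff.2 fun t ht ε hε => ?_
  have hc : 0 < ‖f‖ + K + 1 := by positivity
  obtain ⟨δ, hδ, hmδ⟩ := hm t ht (ε / (‖f‖ + K + 1)) (div_pos hε hc)
  refine ⟨δ, hδ, fun s hs hst => ?_⟩
  have := isFiniteMeasure_of_measure_univ_le_one (hmass s hs)
  have := isFiniteMeasure_of_measure_univ_le_one (hmass t ht)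
  calc dist (∫ x, f x ∂m s) (∫ x, f x ∂m t)
      ≤ (‖f‖ + K + 1) * blDist (m s) (m t) :=
        abs_integral_sub_integral_le_mul_blDist f hf hc (by linarith)
    _ < (‖f‖ + K + 1) * (ε / (‖f‖ + K + 1)) := by gcongr; exact hmδ s hs hst
    _ = ε := mul_div_cancel₀ ε hc.ne'

section Convolution

theorem integrable_comp_sub_of_norm_le (μ : Measure ℝ) [IsFiniteMeasure μ] {F : ℝ → ℝ}
    (hF : Measurable F) {C : ℝ} (hC : ∀ x, ‖F x‖ ≤ C) (x : ℝ) :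
    Integrable (fun y => F (x - y)) μ :=
  .of_bound (hF.comp (measurable_const.sub measurable_id)).aestronglyMeasurable C
    (ae_of_all _ fun y => hC (x - y))

theorem LipschitzWith.comp_sub_left {K : NNReal} {g : ℝ → ℝ} (hg : LipschitzWith K g) (x : ℝ) :
    LipschitzWith K fun y => g (x - y) :=
  .of_dist_le_mul fun a b => by simpa only [dist_sub_left] using hg.dist_le_mul (x - a) (x - b)

theorem lipschitzWith_integral_comp_sub {μ : Measure ℝ} (hμ : μ univ ≤ 1) (g : C₀(ℝ, ℝ))
    {K : NNReal} (hg : LipschitzWith K g) :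
    LipschitzWith K fun x => ∫ y, g (x - y) ∂μ := by
  have := isFiniteMeasure_of_measure_univ_le_one hμ
  have hint := integrable_comp_sub_of_norm_le μ (F := g) g.continuous.measurable g.norm_apply_le
  refine .of_dist_le_mul fun x x' => ?_
  rw [dist_eq_norm, ← integral_sub (hint x) (hint x')]
  refine norm_integral_le_of_measure_univ_le_one hμ (by positivity) fun y => ?_
  have hxy := hg.dist_le_mul (x - y) (x' - y)
  rwa [dist_sub_right, dist_eq_norm] at hxy

theorem continuousOn_integral_comp_sub {m : ℝ → Measure ℝ} (hm : BLContinuous m)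
    (hmass : ∀ t, 0 ≤ t → m t univ ≤ 1) (g : C₀(ℝ, ℝ)) {K : NNReal} (hg : LipschitzWith K g) :
    ContinuousOn (fun p : ℝ × ℝ => ∫ y, g (p.2 - y) ∂m p.1) (Ici 0 ×ˢ univ) :=
  continuousOn_prod_of_continuousOn_lipschitzOnWith' _ K
    (fun t ht => (lipschitzWith_integral_comp_sub (hmass t ht) g hg).lipschitzOnWith)
    (fun x _ => hm.continuousOn_integral hmass (g.comp (Homeomorph.subLeft x).toCocompactMap)
      (hg.comp_sub_left x))

theorem lintegral_lintegral_enorm_comp_sub {h : ℝ → ℝ} (hh : Measurable h) (μ : Measure ℝ)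
    [SFinite μ] : ∫⁻ x, ∫⁻ y, ‖h (x - y)‖ₑ ∂μ = (∫⁻ x, ‖h x‖ₑ) * μ univ := by
  rw [lintegral_lintegral_swap (hh.comp measurable_sub).enorm.aemeasurable]
  simp_rw [lintegral_sub_right_eq_self (fun x => ‖h x‖ₑ)]
  exact lintegral_const _

theorem setLIntegral_enorm_integral_comp_sub_sub_le {F : ℝ → ℝ} (hF : Measurable F) {C : ℝ}
    (hC : ∀ x, ‖F x‖ ≤ C) (g : C₀(ℝ, ℝ)) {μ ρ : Measure ℝ} (hμ : μ univ ≤ 1) (hρ : ρ univ ≤ 1)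
    (s : Set ℝ) :
    ∫⁻ x in s, ‖(∫ y, F (x - y) ∂μ) - ∫ y, F (x - y) ∂ρ‖ₑ ≤
      2 * (∫⁻ x, ‖F x - g x‖ₑ) + ∫⁻ x in s, ‖(∫ y, g (x - y) ∂μ) - ∫ y, g (x - y) ∂ρ‖ₑ := by
  have := isFiniteMeasure_of_measure_univ_le_one hμ
  have := isFiniteMeasure_of_measure_univ_le_one hρ
  set h : ℝ → ℝ := fun z => F z - g z
  have hh : Measurable h := hF.sub g.continuous.measurable
  have hhμ := lintegral_lintegral_enorm_comp_sub hh μ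
  have hhρ := lintegral_lintegral_enorm_comp_sub hh ρ
  have hmeas : ∀ ν : Measure ℝ, [SFinite ν] → Measurable fun x => ∫⁻ y, ‖h (x - y)‖ₑ ∂ν :=
    fun ν _ => (hh.comp measurable_sub).enorm.lintegral_prod_right'
  have hpoint : ∀ x, ‖(∫ y, F (x - y) ∂μ) - ∫ y, F (x - y) ∂ρ‖ₑ ≤
      (∫⁻ y, ‖h (x - y)‖ₑ ∂μ) + ((∫⁻ y, ‖h (x - y)‖ₑ ∂ρ) +
        ‖(∫ y, g (x - y) ∂μ) - ∫ y, g (x - y) ∂ρ‖ₑ) := by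
    intro x
    have hFint := fun ν [IsFiniteMeasure ν] => integrable_comp_sub_of_norm_le ν hF hC x
    have hgint := fun ν [IsFiniteMeasure ν] =>
      integrable_comp_sub_of_norm_le ν (F := g) g.continuous.measurable g.norm_apply_le x
    have hsplit : (∫ y, F (x - y) ∂μ) - ∫ y, F (x - y) ∂ρ =
        (∫ y, h (x - y) ∂μ) - (∫ y, h (x - y) ∂ρ) +
          ((∫ y, g (x - y) ∂μ) - ∫ y, g (x - y) ∂ρ) := by
      simp only [h, integral_sub (hFint μ) (hgint μ), integral_sub (hFint ρ) (hgint ρ)]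
      ring
    rw [hsplit, ← add_assoc]
    refine (enorm_add_le _ _).trans ?_
    gcongr
    exact enorm_sub_le.trans <|
      add_le_add (enorm_integral_le_lintegral_enorm _) (enorm_integral_le_lintegral_enorm _)
  calc ∫⁻ x in s, ‖(∫ y, F (x - y) ∂μ) - ∫ y, F (x - y) ∂ρ‖ₑ
      ≤ (∫⁻ x in s, ∫⁻ y, ‖h (x - y)‖ₑ ∂μ) + ((∫⁻ x in s, ∫⁻ y, ‖h (x - y)‖ₑ ∂ρ) +
          ∫⁻ x in s, ‖(∫ y, g (x - y) ∂μ) - ∫ y, g (x - y) ∂ρ‖ₑ) := by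
        rw [← lintegral_add_left (hmeas ρ), ← lintegral_add_left (hmeas μ)]
        exact lintegral_mono hpoint
    _ ≤ (∫⁻ x, ‖h x‖ₑ) * 1 + ((∫⁻ x, ‖h x‖ₑ) * 1 +
          ∫⁻ x in s, ‖(∫ y, g (x - y) ∂μ) - ∫ y, g (x - y) ∂ρ‖ₑ) := by
        gcongr ?_ + (?_ + _)
        · exact (setLIntegral_le_lintegral _ _).trans (hhμ.trans_le (by gcongr))
        · exact (setLIntegral_le_lintegral _ _).trans (hhρ.trans_le (by gcongr))
    _ = 2 * (∫⁻ x, ‖F x - g x‖ₑ) + ∫⁻ x in s, ‖(∫ y, g (x - y) ∂μ) - ∫ y, g (x - y) ∂ρ‖ₑ := by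
        rw [mul_one, ← add_assoc, two_mul]

end Convolution

theorem tendsto_setLIntegral_enorm_integral_comp_sub_sub {mseq : ℕ → ℝ → Measure ℝ}
    {m : ℝ → Measure ℝ} (hmassseq : ∀ N t, 0 ≤ t → mseq N t univ ≤ 1)
    (hmass : ∀ t, 0 ≤ t → m t univ ≤ 1) (hcontseq : ∀ N, BLContinuous (mseq N))
    (hcont : BLContinuous m)
    (hconv : ∀ t, 0 ≤ t → ∀ f : C₀(ℝ, ℝ),
      Tendsto (fun N => ∫ x, f x ∂mseq N t) atTop (𝓝 (∫ x, f x ∂m t)))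
    (g : C₀(ℝ, ℝ)) {K : NNReal} (hg : LipschitzWith K g) {T X : Set ℝ} (hT : T ⊆ Ici 0)
    (hTm : MeasurableSet T) (hXm : MeasurableSet X) (hTfin : volume T ≠ ⊤)
    (hXfin : volume X ≠ ⊤) :
    Tendsto (fun N => ∫⁻ t in T, ∫⁻ x in X,
      ‖(∫ y, g (x - y) ∂mseq N t) - ∫ y, g (x - y) ∂m t‖ₑ) atTop (𝓝 0) := by
  set Φ : ℕ → ℝ × ℝ → ℝ := fun N p => (∫ y, g (p.2 - y) ∂mseq N p.1) - ∫ y, g (p.2 - y) ∂m p.1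
  set ρ := (volume.restrict T).prod (volume.restrict X)
  have := isFiniteMeasure_restrict.2 hTfin
  have := isFiniteMeasure_restrict.2 hXfin
  have hρ : ρ = (volume.prod volume).restrict (T ×ˢ X) := Measure.prod_restrict T X
  have hmem : ∀ᵐ p ∂ρ, p ∈ T ×ˢ X := hρ ▸ ae_restrict_mem (hTm.prod hXm)
  have hΦ : ∀ N, AEMeasurable (fun p => ‖Φ N p‖ₑ) ρ := by
    intro N
    have hΦcont : ContinuousOn (Φ N) (T ×ˢ X) :=
      ((continuousOn_integral_comp_sub (hcontseq N) (hmassseq N) g hg).sub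
        (continuousOn_integral_comp_sub hcont hmass g hg)).mono (prod_mono hT (subset_univ X))
    rw [hρ]
    exact (hΦcont.aemeasurable (hTm.prod hXm)).enorm
  have hbound : ∀ N, ∀ᵐ p ∂ρ, ‖Φ N p‖ₑ ≤ ‖g‖ₑ + ‖g‖ₑ := fun N => by
    filter_upwards [hmem] with p hp
    have habs_le := fun (μ : Measure ℝ) (hμ : μ univ ≤ 1) =>
      enorm_le_iff_norm_le.2 (norm_integral_le_of_measure_univ_le_one hμ (norm_nonneg g)
        fun y => g.norm_apply_le (p.2 - y))
    exact enorm_sub_le.trans (add_le_add (habs_le _ (hmassseq N p.1 (hT hp.1)))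
      (habs_le _ (hmass p.1 (hT hp.1))))
  have hlim : ∀ᵐ p ∂ρ, Tendsto (fun N => ‖Φ N p‖ₑ) atTop (𝓝 0) := by
    filter_upwards [hmem] with p hp
    have h : Tendsto (fun N => Φ N p) atTop
        (𝓝 ((∫ y, g (p.2 - y) ∂m p.1) - ∫ y, g (p.2 - y) ∂m p.1)) :=
      (hconv p.1 (hT hp.1) (g.comp (Homeomorph.subLeft p.2).toCocompactMap)).sub_const _
    rw [sub_self] at h
    simpa only [enorm_zero] using h.enorm
  have hdom := tendsto_lintegral_of_dominated_convergence' _ hΦ hbound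
    (lintegral_const_lt_top (by simp)).ne hlim
  simp only [lintegral_zero] at hdom
  exact hdom.congr fun N => lintegral_prod _ (hΦ N)

/-- local `L¹` convergence of `∂ₓᵏ u⁽ᴺ⁾` to `∂ₓᵏ u`.  If `m⁽ᴺ⁾(t) → m(t)`
weak* for every `t ≥ 0`, with all values positive measures of mass at most `1` and all
maps continuous for the bounded Lipschitz metric, then for every `R > 0` and `k ≤ n`,
`∫₀^R ∫_{−R}^{R} |(Fₖ*m⁽ᴺ⁾(t))(x) − (Fₖ*m(t))(x)| dx dt → 0`. -/
theorem statement13 (n : ℕ) (ν : Fin (n + 1) → MeasureTheory.SignedMeasure ℝ)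
    (F : Fin (n + 1) → ℝ → ℝ)
    (hF : ∀ k, ∀ x : ℝ, F k x = ν k (Set.Iio x))
    (hFint : ∀ k, Integrable (F k) volume)
    (mseq : ℕ → ℝ → MeasureTheory.Measure ℝ) (m : ℝ → MeasureTheory.Measure ℝ)
    (hmassseq : ∀ N : ℕ, ∀ t : ℝ, 0 ≤ t → mseq N t Set.univ ≤ 1)
    (hmass : ∀ t : ℝ, 0 ≤ t → m t Set.univ ≤ 1)
    (hcontseq : ∀ N : ℕ, BLContinuous (mseq N)) (hcont : BLContinuous m)
    (hconv : ∀ t : ℝ, 0 ≤ t → ∀ f : C₀(ℝ, ℝ),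
      Tendsto (fun N => ∫ x, f x ∂mseq N t) atTop (nhds (∫ x, f x ∂m t))) :
    ∀ R : ℝ, 0 < R → ∀ k : Fin (n + 1),
      Tendsto
        (fun N => ∫⁻ t in Set.Icc 0 R, ∫⁻ x in Set.Icc (-R) R,
          ENNReal.ofReal
            |(∫ y : ℝ, F k (x - y) ∂mseq N t) - ∫ y : ℝ, F k (x - y) ∂m t|)
        atTop (nhds 0) := by
  intro R _ k
  have hFm : Measurable (F k) := funext (hF k) ▸ (ν k).measurable_apply_Iio
  obtain ⟨C, hC⟩ := (ν k).exists_forall_norm_apply_le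
  have hT : volume (Icc 0 R) ≠ ⊤ := measure_Icc_lt_top.ne
  simp only [← Real.enorm_eq_ofReal_abs]
  refine ENNReal.tendsto_nhds_zero_of_forall_le_add fun ε hε => ?_
  obtain ⟨g, K, hg, hFg⟩ := (hFint k).exists_lipschitzWith_lintegral_enorm_sub_le
    (ENNReal.div_pos hε.ne' (ENNReal.mul_ne_top hT (ENNReal.ofNat_ne_top (n := 2)))).ne'
  refine ⟨_, tendsto_setLIntegral_enorm_integral_comp_sub_sub hmassseq hmass hcontseq hcont hconv
    g hg (X := Icc (-R) R) (fun t ht => ht.1) measurableSet_Icc measurableSet_Icc hT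
    measure_Icc_lt_top.ne, fun N => ?_⟩
  calc _ ≤ ∫⁻ t in Icc 0 R, (2 * (∫⁻ x, ‖F k x - g x‖ₑ) +
          ∫⁻ x in Icc (-R) R, ‖(∫ y, g (x - y) ∂mseq N t) - ∫ y, g (x - y) ∂m t‖ₑ) :=
        setLIntegral_mono' measurableSet_Icc fun t ht =>
          setLIntegral_enorm_integral_comp_sub_sub_le hFm (fun x => hF k x ▸ hC (Iio x)) g
            (hmassseq N t ht.1) (hmass t ht.1) _
    _ = volume (Icc 0 R) * 2 * (∫⁻ x, ‖F k x - g x‖ₑ) +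
          ∫⁻ t in Icc 0 R, ∫⁻ x in Icc (-R) R,
            ‖(∫ y, g (x - y) ∂mseq N t) - ∫ y, g (x - y) ∂m t‖ₑ := by
        rw [lintegral_add_left measurable_const, setLIntegral_const, mul_comm, mul_assoc]
    _ ≤ ε + _ := by
        gcongr
        exact (mul_le_mul_right hFg _).trans ENNReal.mul_div_le
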